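/- For integers k ≥ 1, l ≥ 2 and -1 ≤ r ≤ k-l+1: A_{k+1,l}^r − (A_{k,l-1}^r − A_{k,l-1}^{r+1} + A_{k,l}^{r-1} + 2A_{k,l}^r + A_{k,l}^{r+1}) = A_{k-1,l-2}^{r+1}. -/
import Mathlib


/-- Binomial coefficient `C(n,r)` for integer arguments: zero if `r < 0` or
`0 ≤ n < r`, the usual binomial for `0 ≤ r ≤ n`, and the generalized binomial
for negative upper index. -/
def C (n r : ℤ) : ℤ :=
  if r < 0 then 0
  else if 0 ≤ n then (n.toNat.choose r.toNat : ℤ)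
  else (-1) ^ r.toNat * ((r - n - 1).toNat.choose r.toNat : ℤ)

def A (k l r : ℤ) : ℤ :=
  C (l + r - 1) (r - 1) * C (2 * k - l - 1) (k - l - r - 1) + C (l + r) r * C (2 * k - l - 1) (k - l - r)

lemma C_neg' {n r : ℤ} (h : r < 0) : C n r = 0 := by simp [C, h]

lemma C_zero' (n : ℤ) : C n 0 = 1 := by
  by_cases h : (0:ℤ) ≤ n <;> simp [C, h]

lemma pascal (n r : ℤ) : C n r = C (n-1) (r-1) + C (n-1) r := by
  rcases lt_trichotomy r 0 with hr | hr | hr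
  · rw [C_neg' hr, C_neg' (by omega : r - 1 < 0), C_neg' hr]; ring
  · subst hr
    rw [C_zero', C_zero', C_neg' (by omega : (0:ℤ) - 1 < 0)]; ring
  · have h1 : ¬ r < 0 := by omega
    have h2 : ¬ r - 1 < 0 := by omega
    rcases lt_trichotomy n 0 with hn | hn | hn
    · have h3 : ¬ (0:ℤ) ≤ n := by omega
      have h4 : ¬ (0:ℤ) ≤ n - 1 := by omega
      simp only [C, if_neg h1, if_neg h2, if_neg h3, if_neg h4]
      rw [show r - 1 - (n-1) - 1 = r - n - 1 from by ring,
          show r - (n-1) - 1 = r - n from by ring]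
      have hm1 : (r-n).toNat = (r-n-1).toNat + 1 := by omega
      have hs1 : r.toNat = (r-1).toNat + 1 := by omega
      rw [hm1, hs1, pow_succ, Nat.choose_succ_succ]
      push_cast; ring
    · subst hn
      have h3 : (0:ℤ) ≤ 0 := le_refl 0
      have h4 : ¬ (0:ℤ) ≤ 0 - 1 := by omega
      simp only [C, if_neg h1, if_neg h2, if_pos h3, if_neg h4]
      rw [show r - 1 - (0-1) - 1 = r - 1 from by ring,
          show r - (0-1) - 1 = r from by ring]
      have hs1 : r.toNat = (r-1).toNat + 1 := by omega
      rw [hs1, pow_succ]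
      simp [Nat.choose_self, Nat.choose_zero_succ]
    · have h3 : (0:ℤ) ≤ n := by omega
      have h4 : (0:ℤ) ≤ n - 1 := by omega
      simp only [C, if_neg h1, if_neg h2, if_pos h3, if_pos h4]
      have hn1 : n.toNat = (n-1).toNat + 1 := by omega
      have hs1 : r.toNat = (r-1).toNat + 1 := by omega
      rw [hn1, hs1, Nat.choose_succ_succ]
      push_cast; ring

lemma pascal' (n m r s : ℤ) (h1 : m = n - 1) (h2 : s = r - 1) :
    C n r = C m s + C m r := by
  subst h1; subst h2; exact pascal n r

theorem stmt_13 (k l r : ℤ) (hk : 1 ≤ k) (hl : 2 ≤ l) (hr : -1 ≤ r) (hr' : r ≤ k - l + 1) :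
    A (k + 1) l r -
        (A k (l - 1) r - A k (l - 1) (r + 1) + A k l (r - 1) + 2 * A k l r + A k l (r + 1))
      = A (k - 1) (l - 2) (r + 1) := by
  simp only [A]
  rw [show 2 * (k + 1) - l - 1 = 2*k-l+1 from by ring,
      show k + 1 - l - r - 1 = k-l-r from by ring,
      show k + 1 - l - r = k-l-r+1 from by ring,
      show l - 1 + r - 1 = l+r-2 from by ring,
      show 2 * k - (l - 1) - 1 = 2*k-l from by ring,
      show k - (l - 1) - r - 1 = k-l-r from by ring,
      show l - 1 + r = l+r-1 from by ring,
      show k - (l - 1) - r = k-l-r+1 from by ring,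
      show l - 1 + (r + 1) - 1 = l+r-1 from by ring,
      show r + 1 - 1 = r from by ring,
      show k - (l - 1) - (r + 1) - 1 = k-l-r-1 from by ring,
      show l - 1 + (r + 1) = l+r from by ring,
      show k - (l - 1) - (r + 1) = k-l-r from by ring,
      show l + (r - 1) - 1 = l+r-2 from by ring,
      show r - 1 - 1 = r-2 from by ring,
      show k - l - (r - 1) - 1 = k-l-r from by ring,
      show l + (r - 1) = l+r-1 from by ring,
      show k - l - (r - 1) = k-l-r+1 from by ring,
      show l + (r + 1) - 1 = l+r from by ring,
      show k - l - (r + 1) - 1 = k-l-r-2 from by ring,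
      show l + (r + 1) = l+r+1 from by ring,
      show k - l - (r + 1) = k-l-r-1 from by ring,
      show l - 2 + (r + 1) - 1 = l+r-2 from by ring,
      show 2 * (k - 1) - (l - 2) - 1 = 2*k-l-1 from by ring,
      show k - 1 - (l - 2) - (r + 1) - 1 = k-l-r-1 from by ring,
      show l - 2 + (r + 1) = l+r-1 from by ring,
      show k - 1 - (l - 2) - (r + 1) = k-l-r from by ring]
  rw [show C (l+r+1) (r+1) = C (l+r) r + C (l+r) (r+1) from
        pascal' _ _ _ _ (by ring) (by ring),
      show C (l+r) r = C (l+r-1) (r-1) + C (l+r-1) r from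
        pascal' _ _ _ _ (by ring) (by ring),
      show C (l+r) (r+1) = C (l+r-1) r + C (l+r-1) (r+1) from
        pascal' _ _ _ _ (by ring) (by ring),
      show C (l+r-1) (r-1) = C (l+r-2) (r-2) + C (l+r-2) (r-1) from
        pascal' _ _ _ _ (by ring) (by ring),
      show C (l+r-1) r = C (l+r-2) (r-1) + C (l+r-2) r from
        pascal' _ _ _ _ (by ring) (by ring),
      show C (l+r-1) (r+1) = C (l+r-2) r + C (l+r-2) (r+1) from
        pascal' _ _ _ _ (by ring) (by ring),
      show C (2*k-l+1) (k-l-r) = C (2*k-l) (k-l-r-1) + C (2*k-l) (k-l-r) from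
        pascal' _ _ _ _ (by ring) (by ring),
      show C (2*k-l+1) (k-l-r+1) = C (2*k-l) (k-l-r) + C (2*k-l) (k-l-r+1) from
        pascal' _ _ _ _ (by ring) (by ring),
      show C (2*k-l) (k-l-r-1) = C (2*k-l-1) (k-l-r-2) + C (2*k-l-1) (k-l-r-1) from
        pascal' _ _ _ _ (by ring) (by ring),
      show C (2*k-l) (k-l-r) = C (2*k-l-1) (k-l-r-1) + C (2*k-l-1) (k-l-r) from
        pascal' _ _ _ _ (by ring) (by ring),
      show C (2*k-l) (k-l-r+1) = C (2*k-l-1) (k-l-r) + C (2*k-l-1) (k-l-r+1) from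
        pascal' _ _ _ _ (by ring) (by ring)]
  ring
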